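/- For every n ≥ 4, the code B_n of Construction 2 is a cyclic 2-skew-tolerant binary Gray code of length n and size 2^n − 2, and the only two vectors of (Z/2)^n missing from B_n are e_{n−2} and e_{n−2}+e_n. -/

import Mathlib

/-- Codewords `c` and `d` differ exactly at coordinate `i` (1-based), by `±1` there. -/
def TransAt {m : ℕ} (c d : List (ZMod m)) (i : ℕ) : Prop :=
  1 ≤ i ∧ i ≤ c.length ∧ c.length = d.length ∧
  c.take (i-1) = d.take (i-1) ∧ c.drop i = d.drop i ∧
  (d.getD (i-1) 0 = c.getD (i-1) 0 + 1 ∨ d.getD (i-1) 0 = c.getD (i-1) 0 - 1)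

/-- `C` is a cyclic Gray code with transition sequence `δ`. -/
def CyclicGrayWith {m : ℕ} (C : List (List (ZMod m))) (δ : ℕ → ℕ) : Prop :=
  C.Nodup ∧ ∀ i < C.length,
    TransAt (C.getD i []) (C.getD ((i+1) % C.length) []) (δ i)

/-- `C` is a non-cyclic (path) Gray code with transition sequence `δ`. -/
def PathGrayWith {m : ℕ} (C : List (List (ZMod m))) (δ : ℕ → ℕ) : Prop :=
  C.Nodup ∧ ∀ i, i + 1 < C.length →
    TransAt (C.getD i []) (C.getD (i+1) []) (δ i)

/-- cyclic `k`-skew-tolerance. -/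
def SkewCyc (P : ℕ) (δ : ℕ → ℕ) (k : ℤ) : Prop :=
  ∀ i < P, |(δ i : ℤ) - (δ ((i+1) % P) : ℤ)| ≤ k

/-- non-cyclic `k`-skew-tolerance. -/
def SkewPath (P : ℕ) (δ : ℕ → ℕ) (k : ℤ) : Prop :=
  ∀ i, i + 2 < P → |(δ i : ℤ) - (δ (i+1) : ℤ)| ≤ k

/-- the `i`-th standard unit vector (1-based) of length `len` over `ZMod 2`. -/
def unit (len i : ℕ) : List (ZMod 2) :=
  (List.range len).map (fun j => if j + 1 = i then 1 else 0)

/-- pointwise sum of two vectors. -/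
def vadd {m : ℕ} (c d : List (ZMod m)) : List (ZMod m) :=
  List.zipWith (· + ·) c d

/-- `B_{n+1}` from `A_n`: the all-zero word, then `A_n` with `1` appended,
then the reversal of `A_n` minus its first word, with `0` appended. -/
def buildB (An : List (List (ZMod 2))) (len : ℕ) : List (List (ZMod 2)) :=
  List.replicate len (0 : ZMod 2) ::
    (An.map (· ++ [1]) ++ An.tail.reverse.map (· ++ [0]))

/-- Construction 2, codes `A_n` (`n ≥ 3`). -/
def c2A : ℕ → List (List (ZMod 2))
  | 0 => [] | 1 => [] | 2 => []
  | 3 => [[0,0,0],[0,0,1],[0,1,1],[1,1,1],[1,1,0],[1,0,0],[1,0,1]]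
  | (n+4) => (buildB (c2A (n+3)) (n+4)).dropLast ++
      [unit (n+4) (n+2), vadd (unit (n+4) (n+2)) (unit (n+4) (n+4))]

/-- Construction 2, codes `B_n` (`n ≥ 4`). -/
def c2B (n : ℕ) : List (List (ZMod 2)) := buildB (c2A (n-1)) n

/-- Construction 2, codes `C_n` (`n ≥ 4`). -/
def c2C (n : ℕ) : List (List (ZMod 2)) :=
  List.replicate n (0 : ZMod 2) :: unit n (n-2) ::
    vadd (unit n (n-2)) (unit n n) :: (c2B n).tail

/-!
Write `n = k + 3`. By induction on `k`, `A_n` lists without repetition all words of length `n`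
except `e_{n-1}`, begins with `0, e_n, e_{n-1} + e_n`, and is a Gray path whose transition
sequence has the shape `n, n-1, n-2, …, n` with consecutive entries at distance at most 2
(`C2AInvariant`). Reflecting `A_n` in the new coordinate `n + 1` gives `B_{n+1}`: a Gray path that
misses exactly `e_{n-1}` and `e_{n-1} + e_{n+1}` and ends at `e_n`, which is one flip of coordinate
`n` away from its first word `0`; so it closes into a cycle whose transition sequence stays
2-skew-tolerant. Replacing the last word `e_n` of `B_{n+1}` by the two missing words gives
`A_{n+1}` and re-establishes the invariant.
-/

open List

section Lists

variable {α : Type*} {D : List α} {b u₁ u₂ : α} {P : α → Prop}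

theorem List.getD_append_singleton_succ {C : List α} {d x : α} {i : ℕ} (hd : C.head? = some d)
    (hi : i < C.length) : (C ++ [d]).getD (i + 1) x = C.getD ((i + 1) % C.length) x := by
  rcases (Nat.succ_le_of_lt hi).lt_or_eq with hlt | hlen
  · rw [Nat.mod_eq_of_lt hlt, getD_append _ _ _ _ hlt]
  · cases C with
    | nil => simp at hd
    | cons a C => simp_all

theorem List.IsChain.rel_getD {R : α → α → Prop} {l : List α} (h : l.IsChain R) {i : ℕ}
    (hi : i + 1 < l.length) (x : α) : R (l.getD i x) (l.getD (i + 1) x) := by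
  rw [getD_eq_getElem _ _ (by omega), getD_eq_getElem _ _ hi]
  exact isChain_iff_getElem.1 h i hi

theorem nodup_append_pair_of_mem_iff (hnd : (D ++ [b]).Nodup)
    (hmem : ∀ x, x ∈ D ++ [b] ↔ P x ∧ x ≠ u₁ ∧ x ≠ u₂) (hu : u₁ ≠ u₂) :
    (D ++ [u₁, u₂]).Nodup := by
  have hD : ∀ x ∈ D, x ≠ u₁ ∧ x ≠ u₂ := fun x hx => ((hmem x).1 (mem_append_left _ hx)).2
  refine nodup_append.2 ⟨(nodup_append.1 hnd).1, by simp [hu], ?_⟩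
  simp only [mem_cons, not_mem_nil, or_false]
  rintro x hx _ (rfl | rfl) rfl
  exacts [(hD x hx).1 rfl, (hD x hx).2 rfl]

theorem mem_append_pair_iff_of_mem_iff (hnd : (D ++ [b]).Nodup)
    (hmem : ∀ x, x ∈ D ++ [b] ↔ P x ∧ x ≠ u₁ ∧ x ≠ u₂) (hP₁ : P u₁) (hP₂ : P u₂) (x : α) :
    x ∈ D ++ [u₁, u₂] ↔ P x ∧ x ≠ b := by
  have hbD : b ∉ D := fun h => by simpa using (nodup_append.1 hnd).2.2 b h
  have hb := (hmem b).1 (by simp)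
  simp only [mem_append, mem_cons, not_mem_nil, or_false] at hmem ⊢
  constructor
  · rintro (hx | rfl | rfl)
    · exact ⟨((hmem x).1 (.inl hx)).1, by rintro rfl; exact hbD hx⟩
    · exact ⟨hP₁, hb.2.1.symm⟩
    · exact ⟨hP₂, hb.2.2.symm⟩
  · rintro ⟨hx, hxb⟩
    by_cases h₁ : x = u₁
    · exact .inr (.inl h₁)
    by_cases h₂ : x = u₂
    · exact .inr (.inr h₂)
    exact .inl (((hmem x).2 ⟨hx, h₁, h₂⟩).resolve_right hxb)

end Lists

theorem unit_eq_replicate_append (a b : ℕ) :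
    unit (a + 1 + b) (a + 1) = replicate a 0 ++ 1 :: replicate b 0 := by
  simp [unit, range_add, range_succ, Function.comp_def]
  congr 2 <;> simp only [eq_replicate_iff, length_map, length_range, mem_map, mem_range] <;>
    grind

theorem vadd_append {m : ℕ} {p q s r : List (ZMod m)} (h : p.length = q.length) :
    vadd (p ++ s) (q ++ r) = vadd p q ++ vadd s r :=
  zipWith_append h

theorem vadd_replicate_zero {m : ℕ} (a : ℕ) :
    vadd (replicate a (0 : ZMod m)) (replicate a 0) = replicate a 0 := by
  simp [vadd]

theorem unit_add_four_add_two (k : ℕ) : unit (k + 4) (k + 2) = replicate (k + 1) 0 ++ [1, 0, 0] :=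
  unit_eq_replicate_append (k + 1) 2

theorem vadd_unit_add_four (k : ℕ) :
    vadd (unit (k + 4) (k + 2)) (unit (k + 4) (k + 4)) = replicate (k + 1) 0 ++ [1, 0, 1] := by
  have hlast : unit (k + 4) (k + 4) = replicate (k + 1) 0 ++ [0, 0, 1] := by
    simpa [replicate_succ'] using unit_eq_replicate_append (k + 3) 0
  rw [hlast, unit_add_four_add_two, vadd_append (by simp), vadd_replicate_zero]
  rfl

section GrayPath

variable {m : ℕ}

theorem TransAt.symm {c d : List (ZMod m)} {i : ℕ} (h : TransAt c d i) : TransAt d c i := by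
  obtain ⟨h1, h2, h3, h4, h5, h6⟩ := h
  refine ⟨h1, h3 ▸ h2, h3.symm, h4.symm, h5.symm, ?_⟩
  rcases h6 with h | h
  · right; rw [h, add_sub_cancel_right]
  · left; rw [h, sub_add_cancel]

theorem TransAt.append_right {c d : List (ZMod m)} {i : ℕ} (h : TransAt c d i) (x : ZMod m) :
    TransAt (c ++ [x]) (d ++ [x]) i := by
  obtain ⟨h1, h2, h3, h4, h5, h6⟩ := h
  have hi : i - 1 < c.length := by omega
  refine ⟨h1, by simpa using Nat.le_succ_of_le h2, by simp [h3], ?_, ?_, ?_⟩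
  · rw [take_append, take_append, h4, h3]
  · rw [drop_append, drop_append, h5, h3]
  · rwa [getD_append _ _ _ _ hi, getD_append _ _ _ _ (h3 ▸ hi)]

theorem transAt_flip (p s : List (ZMod m)) :
    TransAt (p ++ 0 :: s) (p ++ 1 :: s) (p.length + 1) := by
  refine ⟨by omega, by simp, by simp, by simp, by simp [drop_append], ?_⟩
  simp

inductive IsGrayPath : List (List (ZMod m)) → List ℕ → Prop
  | singleton (c : List (ZMod m)) : IsGrayPath [c] []
  | cons {c d : List (ZMod m)} {C : List (List (ZMod m))} {t : ℕ} {T : List ℕ} :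
      TransAt c d t → IsGrayPath (d :: C) T → IsGrayPath (c :: d :: C) (t :: T)

namespace IsGrayPath

variable {C D : List (List (ZMod m))} {T S : List ℕ}

theorem length_eq (h : IsGrayPath C T) : C.length = T.length + 1 := by
  induction h with
  | singleton => rfl
  | cons _ _ ih => simp [ih]

theorem length_of_mem {c : List (ZMod m)} (h : IsGrayPath (c :: C) T) :
    ∀ d ∈ C, d.length = c.length := by
  generalize hc : c :: C = C' at h
  induction h generalizing c C with
  | singleton => cases hc; simp
  | cons hcd _ ih =>
    cases hc
    intro d hd
    rcases mem_cons.1 hd with rfl | hd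
    · exact hcd.2.2.1.symm
    · rw [ih rfl d hd, hcd.2.2.1]

theorem append {c d : List (ZMod m)} {t : ℕ} (hC : IsGrayPath C T) (hD : IsGrayPath D S)
    (hc : C.getLast? = some c) (hd : D.head? = some d) (h : TransAt c d t) :
    IsGrayPath (C ++ D) (T ++ t :: S) := by
  induction hC with
  | singleton =>
    obtain ⟨D, rfl⟩ : ∃ D', D = d :: D' := by cases D <;> simp_all
    simp only [getLast?_singleton, Option.some.injEq] at hc
    exact .cons (hc ▸ h) hD
  | cons hcd _ ih => exact .cons hcd (ih (by simpa using hc))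

theorem tail {c : List (ZMod m)} {t : ℕ} (h : IsGrayPath (c :: C) (t :: T)) : IsGrayPath C T := by
  cases h with
  | cons _ h => exact h

theorem reverse (h : IsGrayPath C T) : IsGrayPath C.reverse T.reverse := by
  induction h with
  | singleton => exact .singleton _
  | cons hcd _ ih =>
    simpa using ih.append (.singleton _) (by simp) rfl hcd.symm

theorem map_append_singleton (h : IsGrayPath C T) (x : ZMod m) :
    IsGrayPath (C.map (· ++ [x])) T := by
  induction h with
  | singleton => exact .singleton _
  | cons hcd _ ih => exact .cons (hcd.append_right x) ih

theorem dropLast (h : IsGrayPath C T) (hT : T ≠ []) : IsGrayPath C.dropLast T.dropLast := by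
  induction h with
  | singleton => exact absurd rfl hT
  | @cons c d C t T hcd hrest ih =>
    cases hrest with
    | singleton => exact .singleton c
    | cons => simpa using IsGrayPath.cons hcd (ih (by simp))

theorem transAt_getD (h : IsGrayPath C T) {i : ℕ} (hi : i + 1 < C.length) :
    TransAt (C.getD i []) (C.getD (i + 1) []) (T.getD i 0) := by
  induction h generalizing i with
  | singleton => simp at hi
  | cons hcd _ ih =>
    cases i with
    | zero => exact hcd
    | succ i => exact ih (by simpa using hi)

theorem cyclicGrayWith {c d : List (ZMod m)} {t : ℕ} (h : IsGrayPath C T) (hnd : C.Nodup)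
    (hc : C.getLast? = some c) (hd : C.head? = some d) (hcd : TransAt c d t) :
    CyclicGrayWith C (fun i => (T ++ [t]).getD i 0) := by
  have hcyc := h.append (.singleton d) hc rfl hcd
  refine ⟨hnd, fun i hi => ?_⟩
  have := hcyc.transAt_getD (i := i) (by simpa using hi)
  rwa [getD_append _ _ _ _ hi, getD_append_singleton_succ hd hi] at this

end IsGrayPath

end GrayPath

section Skew

def SkewStep (k : ℤ) (a b : ℕ) : Prop := |(a : ℤ) - b| ≤ k

theorem skewStep_iff {k : ℤ} {a b : ℕ} :
    SkewStep k a b ↔ (a : ℤ) - b ≤ k ∧ (b : ℤ) - a ≤ k :=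
  abs_sub_le_iff

theorem SkewStep.symm {k : ℤ} {a b : ℕ} (h : SkewStep k a b) : SkewStep k b a := by
  rwa [SkewStep, abs_sub_comm]

theorem skewCyc_of_isChain {U : List ℕ} {u : ℕ} {k : ℤ} (hu : U.head? = some u)
    (h : (U ++ [u]).IsChain (SkewStep k)) :
    SkewCyc U.length (fun i => U.getD i 0) k := by
  intro i hi
  have := h.rel_getD (i := i) (by simpa using hi) 0
  rwa [getD_append _ _ _ _ hi, getD_append_singleton_succ hu hi] at this

end Skew

def buildDelta (T : List ℕ) (len : ℕ) : List ℕ :=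
  len :: T ++ len :: T.tail.reverse

def deltaA : ℕ → List ℕ
  | 0 => [] | 1 => [] | 2 => []
  | 3 => [3, 2, 1, 3, 2, 3]
  | n + 4 => (buildDelta (deltaA (n + 3)) (n + 4)).dropLast ++ [n + 3, n + 4]

section BuildB

variable {n : ℕ} {A : List (List (ZMod 2))}

theorem length_buildB (a : List (ZMod 2)) (len : ℕ) :
    (buildB (a :: A) len).length = 2 * (A.length + 1) := by
  simp [buildB]
  ring

theorem nodup_buildB (hnd : (replicate n 0 :: A).Nodup) :
    (buildB (replicate n 0 :: A) (n + 1)).Nodup := by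
  rw [nodup_cons] at hnd
  have h10 : ∀ a b : List (ZMod 2), a ++ [1] ≠ b ++ [0] := by simp
  simp only [buildB, tail_cons, nodup_cons, nodup_append, mem_append, mem_map, mem_reverse,
    replicate_succ']
  refine ⟨?_, ?_, ?_, ?_⟩
  · rintro (⟨a, -, h⟩ | ⟨a, ha, h⟩)
    · exact h10 _ _ h
    · exact hnd.1 (append_left_injective _ h ▸ ha)
  · exact Nodup.map (append_left_injective _) (nodup_cons.2 hnd)
  · exact Nodup.map (append_left_injective _) (nodup_reverse.2 hnd.2)
  · rintro _ ⟨a, -, rfl⟩ _ ⟨b, -, rfl⟩ h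
    exact h10 _ _ h

theorem mem_buildB_iff {v : List (ZMod 2)} (hnd : (replicate n 0 :: A).Nodup)
    (hmem : ∀ x, x ∈ replicate n 0 :: A ↔ x.length = n ∧ x ≠ v) (x : List (ZMod 2)) :
    x ∈ buildB (replicate n 0 :: A) (n + 1) ↔
      x.length = n + 1 ∧ x ≠ v ++ [0] ∧ x ≠ v ++ [1] := by
  have hzv : replicate n 0 ≠ v := ((hmem _).1 mem_cons_self).2
  have hA : ∀ y, y ∈ A ↔ y.length = n ∧ y ≠ v ∧ y ≠ replicate n 0 := fun y => by
    rw [← and_assoc, ← hmem, mem_cons]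
    constructor
    · rintro hy
      exact ⟨.inr hy, by rintro rfl; exact (nodup_cons.1 hnd).1 hy⟩
    · rintro ⟨hy | hy, hne⟩
      exacts [absurd hy hne, hy]
  simp only [buildB, tail_cons, mem_cons, mem_append, mem_map, mem_reverse]
  constructor
  · rintro (rfl | ⟨a, ha, rfl⟩ | ⟨a, ha, rfl⟩)
    · simp [replicate_succ', hzv]
    · simp_all
    · simp_all
  · rintro ⟨hlen, h0, h1⟩
    obtain ⟨y, b, rfl⟩ := (eq_nil_or_concat' x).resolve_left (by rintro rfl; simp at hlen)
    replace hlen : y.length = n := by simpa using hlen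
    obtain rfl | rfl := (by decide : ∀ b : ZMod 2, b = 0 ∨ b = 1) b
    · by_cases hy : y = replicate n 0
      · simp [hy, replicate_succ']
      · exact .inr <| .inr ⟨y, (hA y).2 ⟨hlen, by rintro rfl; exact h0 rfl, hy⟩, rfl⟩
    · exact .inr <| .inl ⟨y, mem_cons.1 ((hmem y).2 ⟨hlen, by rintro rfl; exact h1 rfl⟩), rfl⟩

theorem isGrayPath_buildB {t : ℕ} {T : List ℕ} (h : IsGrayPath (replicate n 0 :: A) (t :: T)) :
    IsGrayPath (buildB (replicate n 0 :: A) (n + 1)) (buildDelta (t :: T) (n + 1)) := by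
  have hA : A ≠ [] := by
    rintro rfl
    simpa using h.length_eq
  obtain ⟨c, hc⟩ : ∃ c, A.getLast? = some c := ⟨_, getLast?_eq_some_getLast hA⟩
  have hclen : c.length = n := by
    simpa using h.length_of_mem c (mem_of_getLast? hc)
  have hmid := (h.map_append_singleton 1).append (h.tail.reverse.map_append_singleton 0)
    (by simp [getLast?_cons, getLast?_map, hc]) (by simp [head?_reverse, hc])
    (hclen ▸ (transAt_flip (m := 2) c []).symm)
  have hfirst : TransAt (replicate (n + 1) (0 : ZMod 2)) (replicate n 0 ++ [1]) (n + 1) := by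
    simpa [replicate_succ'] using transAt_flip (m := 2) (replicate n 0) []
  simpa [buildB, buildDelta] using IsGrayPath.cons hfirst hmid

end BuildB

theorem buildDelta_eq_append (k : ℕ) (mid : List ℕ) :
    buildDelta ((k + 3) :: (k + 2) :: (k + 1) :: mid ++ [k + 3]) (k + 4) =
      ((k + 4) :: ((k + 3) :: (k + 2) :: (k + 1) :: mid ++ [k + 3]) ++
        (k + 4) :: ((k + 3) :: mid.reverse ++ [k + 1])) ++ [k + 2] := by
  simp [buildDelta]

theorem isChain_mirror {k : ℕ} {mid e : List ℕ}
    (h : ((k + 3) :: (k + 2) :: (k + 1) :: mid ++ [k + 3]).IsChain (SkewStep 2))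
    (he : ((k + 1) :: e).IsChain (SkewStep 2)) :
    ((k + 4) :: ((k + 3) :: (k + 2) :: (k + 1) :: mid ++ [k + 3]) ++
      (k + 4) :: ((k + 3) :: mid.reverse ++ (k + 1) :: e)).IsChain (SkewStep 2) := by
  have hrev : ((k + 3) :: mid.reverse ++ [k + 1]).IsChain (SkewStep 2) := by
    simpa using isChain_reverse.2 (h.tail.tail.imp fun _ _ => SkewStep.symm)
  have hback := hrev.append_overlap (l₃ := e) (by simpa using he) (cons_ne_nil _ _)
  rw [append_assoc, singleton_append] at hback
  refine isChain_append.2 ⟨h.cons ?_, hback.cons ?_, ?_⟩ <;>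
    simp [skewStep_iff, getLast?_cons] <;> omega

theorem deltaA_add_four_eq {k : ℕ} {mid : List ℕ}
    (hmid : deltaA (k + 3) = (k + 3) :: (k + 2) :: (k + 1) :: mid ++ [k + 3]) :
    deltaA (k + 4) = ((k + 4) :: ((k + 3) :: (k + 2) :: (k + 1) :: mid ++ [k + 3]) ++
      (k + 4) :: ((k + 3) :: mid.reverse ++ [k + 1])) ++ [k + 3, k + 4] := by
  show (buildDelta (deltaA (k + 3)) (k + 4)).dropLast ++ _ = _
  rw [hmid, buildDelta_eq_append, dropLast_concat]

-- The final entry `n - 1` is the flip from the last word `e_{n-1}` of `B_n` back to `0`.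
def deltaB (n : ℕ) : List ℕ := buildDelta (deltaA (n - 1)) n ++ [n - 1]

theorem c2A_eq_dropLast_c2B_append (k : ℕ) : c2A (k + 4) = (c2B (k + 4)).dropLast ++
    [replicate (k + 1) 0 ++ [1, 0, 0], replicate (k + 1) 0 ++ [1, 0, 1]] := by
  rw [← unit_add_four_add_two, ← vadd_unit_add_four]
  rfl

theorem c2B_eq_of_c2A_eq {k : ℕ} {A : List (List (ZMod 2))}
    (hA : c2A (k + 3) = replicate (k + 3) 0 :: (replicate (k + 2) 0 ++ [1]) ::
      (replicate (k + 1) 0 ++ [1, 1]) :: A) :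
    c2B (k + 4) = (replicate (k + 4) 0 :: (c2A (k + 3)).map (· ++ [1]) ++
      A.reverse.map (· ++ [0]) ++ [replicate (k + 1) 0 ++ [1, 1, 0]]) ++
        [replicate (k + 2) 0 ++ [1, 0]] := by
  simp [c2B, buildB, hA]

structure C2AInvariant (k : ℕ) : Prop where
  length_eq : (c2A (k + 3)).length = 2 ^ (k + 3) - 1
  nodup : (c2A (k + 3)).Nodup
  mem_iff : ∀ x, x ∈ c2A (k + 3) ↔ x.length = k + 3 ∧ x ≠ replicate (k + 1) 0 ++ [1, 0]
  eq_cons : ∃ A, c2A (k + 3) =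
    replicate (k + 3) 0 :: (replicate (k + 2) 0 ++ [1]) :: (replicate (k + 1) 0 ++ [1, 1]) :: A
  isGrayPath : IsGrayPath (c2A (k + 3)) (deltaA (k + 3))
  deltaA_eq : ∃ mid, deltaA (k + 3) = (k + 3) :: (k + 2) :: (k + 1) :: mid ++ [k + 3]
  isChain : (deltaA (k + 3)).IsChain (SkewStep 2)

theorem c2AInvariant_zero : C2AInvariant 0 where
  length_eq := rfl
  nodup := by decide
  mem_iff x := by
    have hcube : ∀ a b c : ZMod 2, [a, b, c] ≠ [0, 1, 0] → [a, b, c] ∈ c2A 3 := by decide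
    refine ⟨fun hx => by revert x; decide, fun ⟨hlen, hne⟩ => ?_⟩
    match x, hlen with
    | [a, b, c], _ => exact hcube a b c hne
  eq_cons := ⟨_, rfl⟩
  isGrayPath := by
    refine .cons ?_ (.cons ?_ (.cons ?_ (.cons ?_ (.cons ?_ (.cons ?_ (.singleton _)))))) <;>
      (unfold TransAt; decide)
  deltaA_eq := ⟨[3, 2], rfl⟩
  isChain := by unfold SkewStep; decide

namespace C2AInvariant

variable {k : ℕ}

theorem mem_c2B_iff (h : C2AInvariant k) (x : List (ZMod 2)) :
    x ∈ c2B (k + 4) ↔ x.length = k + 4 ∧ x ≠ replicate (k + 1) 0 ++ [1, 0, 0] ∧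
      x ≠ replicate (k + 1) 0 ++ [1, 0, 1] := by
  obtain ⟨A, hA⟩ := h.eq_cons
  have hnd := h.nodup
  have hmem := h.mem_iff
  rw [hA] at hnd hmem
  show x ∈ buildB (c2A (k + 3)) (k + 3 + 1) ↔ _
  rw [hA, mem_buildB_iff hnd hmem]
  simp

theorem nodup_c2B (h : C2AInvariant k) : (c2B (k + 4)).Nodup := by
  obtain ⟨A, hA⟩ := h.eq_cons
  have hnd := h.nodup
  rw [hA] at hnd
  show (buildB (c2A (k + 3)) (k + 3 + 1)).Nodup
  rw [hA]
  exact nodup_buildB hnd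

theorem length_c2B (h : C2AInvariant k) : (c2B (k + 4)).length = 2 ^ (k + 4) - 2 := by
  obtain ⟨A, hA⟩ := h.eq_cons
  have hlen := h.length_eq
  have hpos := Nat.one_le_two_pow (n := k + 3)
  rw [hA] at hlen
  show (buildB (c2A (k + 3)) (k + 4)).length = _
  rw [hA, length_buildB, pow_succ]
  simp only [length_cons] at hlen ⊢
  omega

theorem isGrayPath_c2B (h : C2AInvariant k) :
    IsGrayPath (c2B (k + 4)) (buildDelta (deltaA (k + 3)) (k + 4)) := by
  obtain ⟨A, hA⟩ := h.eq_cons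
  obtain ⟨mid, hmid⟩ := h.deltaA_eq
  have hpath := h.isGrayPath
  rw [hA, hmid, cons_append] at hpath
  show IsGrayPath (buildB (c2A (k + 3)) (k + 3 + 1)) _
  rw [hA, hmid, cons_append]
  exact isGrayPath_buildB hpath

theorem isGrayPath_c2A_add_four (h : C2AInvariant k) :
    IsGrayPath (c2A (k + 4)) (deltaA (k + 4)) := by
  obtain ⟨A, hA⟩ := h.eq_cons
  have hpath := h.isGrayPath_c2B.dropLast (by simp [buildDelta])
  rw [c2B_eq_of_c2A_eq hA, dropLast_concat] at hpath
  have hflip₁ : TransAt (replicate (k + 1) (0 : ZMod 2) ++ [1, 1, 0])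
      (replicate (k + 1) 0 ++ [1, 0, 0]) (k + 3) := by
    have := (transAt_flip (replicate (k + 1) (0 : ZMod 2) ++ [1]) [0]).symm
    simpa using this
  have hflip₂ : TransAt (replicate (k + 1) (0 : ZMod 2) ++ [1, 0, 0])
      (replicate (k + 1) 0 ++ [1, 0, 1]) (k + 4) := by
    have := transAt_flip (replicate (k + 1) (0 : ZMod 2) ++ [1, 0]) []
    simpa using this
  rw [c2A_eq_dropLast_c2B_append, c2B_eq_of_c2A_eq hA, dropLast_concat]
  exact hpath.append (.cons hflip₂ (.singleton _)) getLast?_concat rfl hflip₁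

theorem succ (h : C2AInvariant k) : C2AInvariant (k + 1) := by
  obtain ⟨A, hA⟩ := h.eq_cons
  obtain ⟨mid, hmid⟩ := h.deltaA_eq
  have hB := c2B_eq_of_c2A_eq hA
  have hA4 := c2A_eq_dropLast_c2B_append k
  rw [hB, dropLast_concat] at hA4
  have hnd := h.nodup_c2B
  have hmem := h.mem_c2B_iff
  have hlenB := h.length_c2B
  rw [hB] at hnd hmem hlenB
  refine ⟨?_, hA4 ▸ nodup_append_pair_of_mem_iff hnd hmem (by simp),
    fun x => hA4 ▸ mem_append_pair_iff_of_mem_iff hnd hmem (by simp) (by simp) x, ?_,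
    h.isGrayPath_c2A_add_four, ?_, ?_⟩
  · have hpos := Nat.one_le_two_pow (n := k + 4)
    show (c2A (k + 4)).length = 2 ^ (k + 4) - 1
    rw [hA4]
    simp only [length_append, length_cons, length_nil] at hlenB ⊢
    omega
  · refine ⟨(replicate (k + 1) 0 ++ [1, 1, 1]) :: A.map (· ++ [1]) ++ A.reverse.map (· ++ [0]) ++
      [replicate (k + 1) 0 ++ [1, 1, 0], replicate (k + 1) 0 ++ [1, 0, 0],
        replicate (k + 1) 0 ++ [1, 0, 1]], ?_⟩
    rw [show k + 1 + 3 = k + 4 from rfl, hA4, hA]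
    simp [replicate_succ']
  · refine ⟨(k + 1) :: mid ++ [k + 3] ++ (k + 4) :: (k + 3) :: mid.reverse ++ [k + 1, k + 3], ?_⟩
    rw [show k + 1 + 3 = k + 4 from rfl, deltaA_add_four_eq hmid]
    simp
  · have hchain := h.isChain
    rw [hmid] at hchain
    rw [show k + 1 + 3 = k + 4 from rfl, deltaA_add_four_eq hmid]
    convert isChain_mirror hchain (e := [k + 3, k + 4]) (by simp [skewStep_iff]) using 1
    simp

theorem cyclicGrayWith_c2B (h : C2AInvariant k) :
    CyclicGrayWith (c2B (k + 4)) (fun i => (deltaB (k + 4)).getD i 0) := by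
  obtain ⟨A, hA⟩ := h.eq_cons
  have hB := c2B_eq_of_c2A_eq hA
  have hwrap :
      TransAt (replicate (k + 2) (0 : ZMod 2) ++ [1, 0]) (replicate (k + 4) 0) (k + 3) := by
    have := (transAt_flip (replicate (k + 2) (0 : ZMod 2)) [0]).symm
    simpa [replicate_succ'] using this
  exact h.isGrayPath_c2B.cyclicGrayWith h.nodup_c2B (by rw [hB]; exact getLast?_concat)
    (by rw [hB]; rfl) hwrap

theorem skewCyc_c2B (h : C2AInvariant k) :
    SkewCyc (c2B (k + 4)).length (fun i => (deltaB (k + 4)).getD i 0) 2 := by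
  obtain ⟨mid, hmid⟩ := h.deltaA_eq
  have hlen : (c2B (k + 4)).length = (deltaB (k + 4)).length := by
    simp [deltaB, h.isGrayPath_c2B.length_eq]
  rw [hlen]
  refine skewCyc_of_isChain (u := k + 4) (by simp [deltaB, buildDelta]) ?_
  have hchain := h.isChain
  rw [hmid] at hchain
  show (buildDelta (deltaA (k + 3)) (k + 4) ++ [k + 3] ++ [k + 4]).IsChain _
  rw [hmid, buildDelta_eq_append]
  convert isChain_mirror hchain (e := [k + 2, k + 3, k + 4]) (by simp [skewStep_iff]) using 1
  simp

end C2AInvariant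

theorem c2AInvariant : ∀ k, C2AInvariant k
  | 0 => c2AInvariant_zero
  | k + 1 => (c2AInvariant k).succ

theorem stmt5 : ∀ n : ℕ, 4 ≤ n →
    (∀ c ∈ c2B n, c.length = n) ∧ (c2B n).length = 2 ^ n - 2 ∧
    (∀ c : List (ZMod 2), c.length = n →
      (c ∉ c2B n ↔ c = unit n (n-2) ∨ c = vadd (unit n (n-2)) (unit n n))) ∧
    ∃ δ : ℕ → ℕ, CyclicGrayWith (c2B n) δ ∧ SkewCyc (c2B n).length δ 2 := by
  intro n hn
  obtain ⟨k, rfl⟩ : ∃ k, n = k + 4 := ⟨n - 4, by omega⟩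
  have h := c2AInvariant k
  refine ⟨fun c hc => ((h.mem_c2B_iff c).1 hc).1, h.length_c2B, fun c hc => ?_,
    _, h.cyclicGrayWith_c2B, h.skewCyc_c2B⟩
  rw [show k + 4 - 2 = k + 2 from rfl, vadd_unit_add_four, unit_add_four_add_two, h.mem_c2B_iff]
  tauto
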